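/- arXiv:2206.05279 — 8 statements merged into one kernel-verified Lean document; each statement's English description precedes it below -/
import Mathlib

section
/- The rANS encoding step is inverted by the decoding step: fix M, and for each symbol x let P_x > 0 and C_x = ∑_{i<x} P_i with ∑_x P_x = 2^M. If S' = 2^M · ⌊S / P_x⌋ + C_x + (S mod P_x) is the encoded state, then the decoding step recovers the original state: P_x · ⌊S' / 2^M⌋ + (S' mod 2^M) - C_x = S. -/
/-- rANS encode step is inverted by the decode step. -/
theorem rans_encode_decode_inverse
    (M : ℕ) {n : ℕ} (P : Fin n → ℕ)
    (hP : ∀ x, 1 ≤ P x) (hsum : ∑ x, P x = 2 ^ M)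
    (C : Fin n → ℕ) (hC : ∀ x, C x = ∑ i ∈ Finset.Iio x, P i)
    (x : Fin n) (S S' : ℕ)
    (hS' : S' = 2 ^ M * (S / P x) + C x + S % P x) :
    P x * (S' / 2 ^ M) + S' % 2 ^ M - C x = S := by
  have hle : C x + P x ≤ 2 ^ M := by
    rw [hC, ← hsum, add_comm, ← Finset.sum_insert (by simp)]
    exact Finset.sum_le_sum_of_subset (Finset.subset_univ _)
  have hlt : C x + S % P x < 2 ^ M :=
    lt_of_lt_of_le (by have := Nat.mod_lt S (hP x); omega) hle
  have h2 : 0 < 2 ^ M := Nat.pow_pos (by norm_num)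
  subst hS'
  rw [add_assoc, Nat.mul_add_div h2, Nat.mul_add_mod,
    Nat.div_eq_of_lt hlt, Nat.mod_eq_of_lt hlt, add_zero]
  have := Nat.div_add_mod S (P x)
  omega
end

section
/- After encoding with rANS, the decoded value of S' mod 2^M lies in the correct symbol's interval: if S' = 2^M · ⌊S/P_x⌋ + C_x + (S mod P_x) with 0 < P_x and C_x + P_x ≤ 2^M, then C_x ≤ S' mod 2^M < C_x + P_x. -/
/-- After rANS encoding, `S' mod 2^M` lies in the correct symbol's interval. -/
theorem rans_encoded_state_in_interval
    (M S Px Cx : ℕ) (hP : 0 < Px) (hCP : Cx + Px ≤ 2 ^ M)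
    (S' : ℕ) (hS' : S' = 2 ^ M * (S / Px) + Cx + S % Px) :
    Cx ≤ S' % 2 ^ M ∧ S' % 2 ^ M < Cx + Px := by
  have hslot : Cx + S % Px < Cx + Px := Nat.add_lt_add_left (Nat.mod_lt S hP) Cx
  have hdecode : S' % 2 ^ M = Cx + S % Px := by
    rw [hS', add_assoc, mul_comm, Nat.mul_add_mod_of_lt (hslot.trans_le hCP)]
  rw [hdecode]
  exact ⟨Nat.le_add_right Cx _, hslot⟩
end

section
/- In the modified rANS encoder, after the renormalization loop the state lies in [P_x, 2·P_x): starting from S ∈ [2^M, 2^{M+1}) with 1 ≤ P_x ≤ 2^M, there is a unique number b of halvings such that ⌊S / 2^b⌋ ∈ [P_x, 2·P_x). -/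
/-- Unique number of halvings bringing the state into `[P, 2P)`. -/
theorem rans_renormalization_unique
    (M S Px : ℕ) (hS : 2 ^ M ≤ S ∧ S < 2 ^ (M + 1))
    (hP : 1 ≤ Px ∧ Px ≤ 2 ^ M) :
    ∃! b : ℕ, Px ≤ S / 2 ^ b ∧ S / 2 ^ b < 2 * Px := by
  obtain ⟨hS1, hS2⟩ := hS
  obtain ⟨hP1, hP2⟩ := hP
  have hSP : Px ≤ S := le_trans hP2 hS1
  have hex : ∃ b, S / 2 ^ b < 2 * Px := by
    refine ⟨S, ?_⟩
    rw [Nat.div_eq_of_lt (Nat.lt_two_pow_self (n := S))]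
    positivity
  classical
  set b := Nat.find hex with hbdef
  have hb : S / 2 ^ b < 2 * Px := Nat.find_spec hex
  have hlow : Px ≤ S / 2 ^ b := by
    rcases hbe : b with _ | k
    · simpa using hSP
    · have hk : ¬ S / 2 ^ k < 2 * Px := Nat.find_min hex (by rw [hbdef] at hbe; omega)
      push_neg at hk
      have : 2 * Px / 2 ≤ S / 2 ^ k / 2 := Nat.div_le_div_right hk
      rw [Nat.mul_div_cancel_left _ (by norm_num)] at this
      rwa [pow_succ, ← Nat.div_div_eq_div_mul]
  -- a small step lemma: if S / 2^c < 2*Px then S / 2^(c+1) < Px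
  have hstep : ∀ c, S / 2 ^ c < 2 * Px → S / 2 ^ (c + 1) < Px := by
    intro c hc
    rw [pow_succ, ← Nat.div_div_eq_div_mul]
    omega
  refine ⟨b, ⟨hlow, hb⟩, ?_⟩
  intro c ⟨hc1, hc2⟩
  by_contra hne
  rcases Nat.lt_or_ge c b with h | h
  · exact absurd hc2 (Nat.find_min hex h)
  · have hlt : b < c := lt_of_le_of_ne h (fun e => hne e.symm)
    have : S / 2 ^ c ≤ S / 2 ^ (b + 1) :=
      Nat.div_le_div_left (Nat.pow_le_pow_right (by norm_num) hlt) (by positivity)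
    have := hstep b hb
    omega
end

section
/- The number of bits pushed by the modified rANS encoder differs by at most 1 across states: for fixed P_x with 1 ≤ P_x ≤ 2^M, and for any S, S' ∈ [2^M, 2^{M+1}), if b(S) denotes the number of halvings needed so that ⌊S/2^{b(S)}⌋ ∈ [P_x, 2P_x), then |b(S) - b(S')| ≤ 1. -/
lemma rans_aux (M Px S S' b b' : ℕ)
    (h1 : Px * 2 ^ b ≤ S) (h2 : S < 2 ^ (M + 1))
    (h3 : 2 ^ M ≤ S') (h4 : S' < 2 * Px * 2 ^ b') :
    b ≤ b' + 1 := by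
  by_contra h
  push_neg at h
  have hb : b' + 2 ≤ b := h
  have e1 : Px * 2 ^ (b' + 2) ≤ Px * 2 ^ b :=
    Nat.mul_le_mul_left _ (Nat.pow_le_pow_right (by norm_num) hb)
  have e2 : 2 ^ (M + 1) < Px * 2 ^ (b' + 2) := by
    have : 2 ^ M < 2 * Px * 2 ^ b' := lt_of_le_of_lt h3 h4
    calc 2 ^ (M + 1) = 2 * 2 ^ M := by ring
    _ < 2 * (2 * Px * 2 ^ b') := by omega
    _ = Px * 2 ^ (b' + 2) := by ring
  omega

/-- The number of bits pushed by the modified rANS encoder differs by at most 1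
across states in `[2^M, 2^(M+1))`. -/
theorem rans_bit_count_differs_by_at_most_one
    (M Px : ℕ) (hP : 1 ≤ Px ∧ Px ≤ 2 ^ M)
    (S S' b b' : ℕ)
    (hS : 2 ^ M ≤ S ∧ S < 2 ^ (M + 1))
    (hS' : 2 ^ M ≤ S' ∧ S' < 2 ^ (M + 1))
    (hb : Px ≤ S / 2 ^ b ∧ S / 2 ^ b < 2 * Px)
    (hb' : Px ≤ S' / 2 ^ b' ∧ S' / 2 ^ b' < 2 * Px) :
    |(b : ℤ) - (b' : ℤ)| ≤ 1 := by
  have pos : ∀ k : ℕ, 0 < 2 ^ k := fun k => Nat.pow_pos (by norm_num)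
  have h1 : Px * 2 ^ b ≤ S := (Nat.le_div_iff_mul_le (pos b)).mp hb.1
  have h2 : S < 2 * Px * 2 ^ b := (Nat.div_lt_iff_lt_mul (pos b)).mp hb.2
  have h1' : Px * 2 ^ b' ≤ S' := (Nat.le_div_iff_mul_le (pos b')).mp hb'.1
  have h2' : S' < 2 * Px * 2 ^ b' := (Nat.div_lt_iff_lt_mul (pos b')).mp hb'.2
  have k1 : b ≤ b' + 1 := rans_aux M Px S S' b b' h1 hS.2 hS'.1 h2'
  have k2 : b' ≤ b + 1 := rans_aux M Px S' S b' b h1' hS'.2 hS.1 h2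
  rw [abs_le]
  omega
end

section
/- Correctness of the table-based bit count (ANS-AI encoder, Lemma 2): let k be the integer such that P_x · 2^k ∈ [2^M, 2^{M+1}), where 1 ≤ P_x < 2^{M-1} (hence 2 ≤ k ≤ M). Define δ = k·2^M - P_x·2^k. Then for all S ∈ [2^M, 2^{M+1}): ⌊(δ + S)/2^M⌋ = k if S ∈ [P_x·2^k, 2^{M+1}), and ⌊(δ + S)/2^M⌋ = k - 1 if S ∈ [2^M, P_x·2^k). -/
/-!
Write `a = Px * 2 ^ k`, so that `δ + S = k * 2 ^ M + (S - a)`. Since `2 ^ M ≤ a < 2 ^ (M + 1)`, the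
offset `S - a` lies in `[0, 2 ^ M)` when `a ≤ S` and in `[-2 ^ M, 0)` when `S < a`, which puts the
quotient at `k` resp. `k - 1`. The bound `Px < 2 ^ (M - 1)` forces `k ≥ 2`, hence `a < k * 2 ^ M`,
so the natural subtraction in `δ` does not truncate.
-/

namespace Nat

variable {a b k S : ℕ}

theorem mul_sub_add_div_eq_of_le (hak : a ≤ k * b) (haS : a ≤ S) (hSa : S < a + b) :
    (k * b - a + S) / b = k := by
  apply Nat.div_eq_of_lt_le
  · omega
  · rw [Nat.add_one_mul]
    omega

theorem mul_sub_add_div_eq_sub_one_of_lt (hak : a ≤ k * b) (hSa : S < a) (haS : a ≤ S + b) :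
    (k * b - a + S) / b = k - 1 := by
  apply Nat.div_eq_of_lt_le
  · rw [Nat.sub_one_mul]
    omega
  · rw [Nat.sub_add_cancel (Nat.pos_of_mul_pos_right (b := b) (by omega))]
    omega

theorem two_le_of_pow_le_mul_pow {M Px : ℕ} (hP : Px < 2 ^ (M - 1)) (hk : 2 ^ M ≤ Px * 2 ^ k) :
    2 ≤ k := by
  have hM : M ≠ 0 := by
    rintro rfl
    simp_all
  have hlt : 2 ^ M < 2 ^ (M - 1 + k) := by
    rw [pow_add]
    exact hk.trans_lt (Nat.mul_lt_mul_of_pos_right hP (by positivity))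
  have := (Nat.pow_lt_pow_iff_right (by norm_num)).mp hlt
  omega

end Nat

theorem ansai_table_bit_count_correct_general
    (M Px k : ℕ)
    (hP : 1 ≤ Px ∧ Px < 2 ^ (M - 1))
    (hk : 2 ^ M ≤ Px * 2 ^ k ∧ Px * 2 ^ k < 2 ^ (M + 1))
    (δ : ℕ) (hδ : δ = k * 2 ^ M - Px * 2 ^ k) :
    ∀ S : ℕ, 2 ^ M ≤ S → S < 2 ^ (M + 1) →
      (Px * 2 ^ k ≤ S → (δ + S) / 2 ^ M = k) ∧
      (S < Px * 2 ^ k → (δ + S) / 2 ^ M = k - 1) := by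
  intro S hMS hSM
  rw [pow_succ] at hk hSM
  have hk2 : 2 ≤ k := Nat.two_le_of_pow_le_mul_pow hP.2 hk.1
  have hak : Px * 2 ^ k ≤ k * 2 ^ M := by nlinarith
  subst hδ
  exact ⟨fun hle => Nat.mul_sub_add_div_eq_of_le hak hle (by omega),
    fun hlt => Nat.mul_sub_add_div_eq_sub_one_of_lt hak hlt (by omega)⟩

/-- Correctness of the table-based bit count in the ANS-AI encoder (Lemma 2). -/
theorem ansai_table_bit_count_correct
    (M Px k : ℕ) (hM : 2 ≤ M)
    (hP : 1 ≤ Px ∧ Px < 2 ^ (M - 1))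
    (hk : 2 ^ M ≤ Px * 2 ^ k ∧ Px * 2 ^ k < 2 ^ (M + 1))
    (δ : ℕ) (hδ : δ = k * 2 ^ M - Px * 2 ^ k) :
    ∀ S : ℕ, 2 ^ M ≤ S → S < 2 ^ (M + 1) →
      (Px * 2 ^ k ≤ S → (δ + S) / 2 ^ M = k) ∧
      (S < Px * 2 ^ k → (δ + S) / 2 ^ M = k - 1) :=
  ansai_table_bit_count_correct_general M Px k hP hk δ hδ
end

section
/- The table entry δ fits in 16 bits for M ≤ 12 (Lemma 2 of the paper): if M ≤ 12, 1 ≤ P_x < 2^{M-1}, and k is the unique natural with 2^M ≤ P_x·2^k < 2^{M+1}, then δ = k·2^M - P_x·2^k satisfies 0 < δ < 2^16. -/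
/-!
The normalisation `2^M ≤ P_x·2^k < 2^(M+1)` pins `P_x·2^k` within one factor of two of `2^M`,
so `δ = k·2^M - P_x·2^k` lies in `((k-2)·2^M, (k-1)·2^M]`. Comparing exponents, `P_x < 2^(M-1)`
forces `k ≥ 2` and `P_x ≥ 1` forces `k ≤ M`; hence `0 < δ ≤ 11·2^12 < 2^16`.
-/

theorem Nat.lt_add_of_two_pow_le_mul_two_pow {p m n k : ℕ} (hp : p < 2 ^ m)
    (h : 2 ^ n ≤ p * 2 ^ k) : n < m + k := by
  have : 2 ^ n < 2 ^ (m + k) := by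
    rw [pow_add]
    exact h.trans_lt (Nat.mul_lt_mul_of_pos_right hp (by positivity))
  exact (Nat.pow_lt_pow_iff_right (by norm_num)).mp this

theorem Nat.lt_of_mul_two_pow_lt_two_pow {p n k : ℕ} (hp : 1 ≤ p)
    (h : p * 2 ^ k < 2 ^ n) : k < n :=
  (Nat.pow_lt_pow_iff_right (by norm_num)).mp ((Nat.le_mul_of_pos_left _ hp).trans_lt h)

theorem Int.mul_two_pow_sub_mem_Ioc {x : ℤ} (k M : ℕ) (h₁ : 2 ^ M ≤ x) (h₂ : x < 2 ^ (M + 1)) :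
    k * 2 ^ M - x ∈ Set.Ioc (((k : ℤ) - 2) * 2 ^ M) (((k : ℤ) - 1) * 2 ^ M) := by
  rw [pow_succ] at h₂
  constructor <;> linarith

/-- The table entry δ fits in 16 bits for `M ≤ 12` (Lemma 2 of the paper). -/
theorem ansai_delta_fits_uint16
    (M Px k : ℕ) (hM : 2 ≤ M ∧ M ≤ 12)
    (hP : 1 ≤ Px ∧ Px < 2 ^ (M - 1))
    (hk : 2 ^ M ≤ Px * 2 ^ k ∧ Px * 2 ^ k < 2 ^ (M + 1))
    (δ : ℤ) (hδ : δ = (k : ℤ) * 2 ^ M - (Px : ℤ) * 2 ^ k) :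
    0 < δ ∧ δ < 2 ^ 16 := by
  have hk_two : 2 ≤ k := by
    have := Nat.lt_add_of_two_pow_le_mul_two_pow hP.2 hk.1
    omega
  have hk_le : k ≤ 12 := by
    have := Nat.lt_of_mul_two_pow_lt_two_pow hP.1 hk.2
    omega
  obtain ⟨hδ_lower, hδ_upper⟩ := Int.mul_two_pow_sub_mem_Ioc (x := (Px : ℤ) * 2 ^ k) k M
    (by exact_mod_cast hk.1) (by exact_mod_cast hk.2)
  rw [← hδ] at hδ_lower hδ_upper
  constructor
  · calc (0 : ℤ) ≤ ((k : ℤ) - 2) * 2 ^ M := mul_nonneg (by omega) (by positivity)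
      _ < δ := hδ_lower
  · calc δ ≤ ((k : ℤ) - 1) * 2 ^ M := hδ_upper
      _ ≤ 11 * 2 ^ 12 := by gcongr <;> omega
      _ < 2 ^ 16 := by norm_num
end

section
/- BPD excess of ANS-AI over entropy (Lemma 1 of the paper): let P_1,...,P_n be positive integers with ∑ P_i = 2^M. Then (1/2^{2M}) · ∑_{j=2^M}^{2^{M+1}-1} ∑_i P_i · ⌊log₂(j/P_i)⌋ ≤ M + 2 - log₂ e - (1/2^M)∑_i P_i log₂ P_i; consequently the ANS-AI expected bits-per-symbol exceeds the rANS lower bound M - (∑_i P_i log₂ P_i)/2^M by at most 2 - log₂ e. -/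
private lemma log_step (j : ℕ) (hj : 1 ≤ j) :
    Real.log j ≤ (((j+1:ℕ):ℝ) * Real.log ((j+1:ℕ)) - ((j+1:ℕ):ℝ)) -
      ((j:ℝ) * Real.log j - (j:ℝ)) := by
  have hx : (1:ℝ) ≤ (j:ℝ) := by exact_mod_cast hj
  have hx0 : (0:ℝ) < (j:ℝ) := by linarith
  have hx1 : (0:ℝ) < (j:ℝ) + 1 := by linarith
  have hq : (0:ℝ) < (j:ℝ) / ((j:ℝ)+1) := by positivity
  have h1 : Real.log ((j:ℝ) / ((j:ℝ)+1)) ≤ (j:ℝ) / ((j:ℝ)+1) - 1 :=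
    Real.log_le_sub_one_of_pos hq
  have h2 : Real.log ((j:ℝ) / ((j:ℝ)+1)) = Real.log j - Real.log ((j:ℝ)+1) :=
    Real.log_div (ne_of_gt hx0) (ne_of_gt hx1)
  have h3 : (j:ℝ) / ((j:ℝ)+1) - 1 = -(1 / ((j:ℝ)+1)) := by
    field_simp; ring
  have h4 : Real.log ((j:ℝ)+1) - Real.log j ≥ 1 / ((j:ℝ)+1) := by
    rw [h2, h3] at h1; linarith
  have h5 : ((j:ℝ)+1) * (Real.log ((j:ℝ)+1) - Real.log j) ≥ ((j:ℝ)+1) * (1 / ((j:ℝ)+1)) :=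
    mul_le_mul_of_nonneg_left h4 (le_of_lt hx1)
  have h6 : ((j:ℝ)+1) * (1 / ((j:ℝ)+1)) = 1 := by field_simp
  push_cast
  nlinarith [h5, h6]

private lemma log_sum_bound (N : ℕ) (hN : 1 ≤ N) :
    ∑ j ∈ Finset.Ico N (2*N), Real.log j ≤
      ((2*N:ℕ):ℝ) * Real.log ((2*N:ℕ)) - ((2*N:ℕ):ℝ) - ((N:ℝ) * Real.log N - (N:ℝ)) := by
  have hle : N ≤ 2*N := by omega
  set g : ℕ → ℝ := fun j => (j:ℝ) * Real.log j - (j:ℝ) with hg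
  have h1 : ∑ j ∈ Finset.Ico N (2*N), Real.log j
      ≤ ∑ j ∈ Finset.Ico N (2*N), (g (j+1) - g j) := by
    apply Finset.sum_le_sum
    intro j hj
    have hj1 : 1 ≤ j := le_trans hN (Finset.mem_Ico.mp hj).1
    exact log_step j hj1
  have h2 : ∑ j ∈ Finset.Ico N (2*N), (g (j+1) - g j) = g (2*N) - g N := by
    rw [Finset.sum_Ico_eq_sub _ hle, Finset.sum_range_sub g, Finset.sum_range_sub g]
    ring
  rw [h2] at h1
  exact h1

/-- BPD excess of ANS-AI over entropy (Lemma 1 of the paper). -/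
theorem ansai_bpd_excess
    (n M : ℕ) (hn : 0 < n) (hM : 0 < M)
    (P : Fin n → ℕ) (hP : ∀ i, 1 ≤ P i) (hsum : ∑ i, P i = 2 ^ M) :
    (1 / (2 : ℝ) ^ (2 * M)) *
        ∑ j ∈ Finset.Ico ((2 : ℕ) ^ M) (2 ^ (M + 1)), ∑ i,
          (P i : ℝ) * (⌊Real.logb 2 ((j : ℝ) / (P i : ℝ))⌋ : ℝ)
      ≤ (M : ℝ) + 2 - Real.logb 2 (Real.exp 1)
          - (∑ i, (P i : ℝ) * Real.logb 2 (P i : ℝ)) / 2 ^ M ∧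
    (1 / (2 : ℝ) ^ (2 * M)) *
        ∑ j ∈ Finset.Ico ((2 : ℕ) ^ M) (2 ^ (M + 1)), ∑ i,
          (P i : ℝ) * (⌊Real.logb 2 ((j : ℝ) / (P i : ℝ))⌋ : ℝ)
      ≤ ((M : ℝ) - (∑ i, (P i : ℝ) * Real.logb 2 (P i : ℝ)) / 2 ^ M)
          + (2 - Real.logb 2 (Real.exp 1)) := by
  set N : ℕ := 2 ^ M with hN
  have hN1 : 1 ≤ N := Nat.one_le_two_pow
  have hNR : (0:ℝ) < (N:ℝ) := by exact_mod_cast hN1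
  have hlog2 : (0:ℝ) < Real.log 2 := Real.log_pos (by norm_num)
  set S : ℝ := ∑ i, (P i : ℝ) * Real.logb 2 (P i : ℝ) with hS
  have hlogbe : Real.logb 2 (Real.exp 1) = 1 / Real.log 2 := by
    rw [Real.logb, Real.log_exp]
  have hpow : (2:ℕ) ^ (M+1) = 2 * N := by rw [hN]; ring
  -- Step 1: bound floors and simplify inner sum
  have step1 : ∀ j ∈ Finset.Ico N (2*N),
      ∑ i, (P i : ℝ) * (⌊Real.logb 2 ((j : ℝ) / (P i : ℝ))⌋ : ℝ)
        ≤ (N:ℝ) * Real.logb 2 j - S := by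
    intro j hj
    have hjN : N ≤ j := (Finset.mem_Ico.mp hj).1
    have hj1 : 1 ≤ j := le_trans hN1 hjN
    have hjR : (0:ℝ) < (j:ℝ) := by exact_mod_cast hj1
    have h1 : ∑ i, (P i : ℝ) * (⌊Real.logb 2 ((j : ℝ) / (P i : ℝ))⌋ : ℝ)
        ≤ ∑ i, (P i : ℝ) * Real.logb 2 ((j : ℝ) / (P i : ℝ)) := by
      apply Finset.sum_le_sum
      intro i _
      have : (0:ℝ) ≤ (P i : ℝ) := Nat.cast_nonneg _
      exact mul_le_mul_of_nonneg_left (Int.floor_le _) this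
    have h2 : ∑ i, (P i : ℝ) * Real.logb 2 ((j : ℝ) / (P i : ℝ))
        = (N:ℝ) * Real.logb 2 j - S := by
      have : ∀ i : Fin n, (P i : ℝ) * Real.logb 2 ((j : ℝ) / (P i : ℝ))
          = (P i : ℝ) * Real.logb 2 j - (P i : ℝ) * Real.logb 2 (P i : ℝ) := by
        intro i
        have hPi : (0:ℝ) < (P i : ℝ) := by exact_mod_cast hP i
        rw [Real.logb_div (ne_of_gt hjR) (ne_of_gt hPi)]
        ring
      rw [Finset.sum_congr rfl (fun i _ => this i), Finset.sum_sub_distrib,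
        ← Finset.sum_mul, hS]
      have : (∑ i, (P i : ℝ)) = (N:ℝ) := by
        rw [hN]; exact_mod_cast congrArg (Nat.cast : ℕ → ℝ) hsum
      rw [this]
    linarith [h1, h2.le, h2.ge]
  -- Step 2: bound sum of logb over j
  have step2 : ∑ j ∈ Finset.Ico N (2*N), Real.logb 2 (j:ℝ)
      ≤ (N:ℝ) * ((M:ℝ) + 2 - 1 / Real.log 2) := by
    have hls := log_sum_bound N hN1
    have hlogN : Real.log (N:ℝ) = (M:ℝ) * Real.log 2 := by
      rw [hN]; push_cast; rw [Real.log_pow]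
    have hlog2N : Real.log ((2*N:ℕ):ℝ) = Real.log 2 + (M:ℝ) * Real.log 2 := by
      push_cast
      rw [Real.log_mul (by norm_num) (ne_of_gt hNR), hlogN]
    have key : ∑ j ∈ Finset.Ico N (2*N), Real.log (j:ℝ)
        ≤ (N:ℝ) * (((M:ℝ) + 2) * Real.log 2 - 1) := by
      calc ∑ j ∈ Finset.Ico N (2*N), Real.log (j:ℝ)
          ≤ ((2*N:ℕ):ℝ) * Real.log ((2*N:ℕ)) - ((2*N:ℕ):ℝ) - ((N:ℝ) * Real.log N - (N:ℝ)) := hls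
        _ = (N:ℝ) * (((M:ℝ) + 2) * Real.log 2 - 1) := by
            rw [hlog2N, hlogN]; push_cast; ring
    have : ∑ j ∈ Finset.Ico N (2*N), Real.logb 2 (j:ℝ)
        = (∑ j ∈ Finset.Ico N (2*N), Real.log (j:ℝ)) / Real.log 2 := by
      rw [Finset.sum_div]
      exact Finset.sum_congr rfl (fun j _ => by rw [Real.logb])
    rw [this]
    rw [div_le_iff₀ hlog2]
    calc ∑ j ∈ Finset.Ico N (2*N), Real.log (j:ℝ)
        ≤ (N:ℝ) * (((M:ℝ) + 2) * Real.log 2 - 1) := key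
      _ = (N:ℝ) * ((M:ℝ) + 2 - 1 / Real.log 2) * Real.log 2 := by
          field_simp
  -- Combine
  have main : (1 / (2 : ℝ) ^ (2 * M)) *
        ∑ j ∈ Finset.Ico ((2 : ℕ) ^ M) (2 ^ (M + 1)), ∑ i,
          (P i : ℝ) * (⌊Real.logb 2 ((j : ℝ) / (P i : ℝ))⌋ : ℝ)
      ≤ (M : ℝ) + 2 - Real.logb 2 (Real.exp 1) - S / 2 ^ M := by
    have hIco : Finset.Ico ((2:ℕ) ^ M) (2 ^ (M+1)) = Finset.Ico N (2*N) := by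
      rw [hN, hpow]
    have hcard : ((Finset.Ico N (2*N)).card : ℝ) = (N:ℝ) := by
      have h2N : 2*N - N = N := by omega
      rw [Nat.card_Ico, h2N]
    have T1 : ∑ j ∈ Finset.Ico N (2*N), ∑ i,
          (P i : ℝ) * (⌊Real.logb 2 ((j : ℝ) / (P i : ℝ))⌋ : ℝ)
        ≤ ∑ j ∈ Finset.Ico N (2*N), ((N:ℝ) * Real.logb 2 j - S) :=
      Finset.sum_le_sum step1
    have T2 : ∑ j ∈ Finset.Ico N (2*N), ((N:ℝ) * Real.logb 2 j - S)
        = (N:ℝ) * (∑ j ∈ Finset.Ico N (2*N), Real.logb 2 (j:ℝ)) - (N:ℝ) * S := by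
      rw [Finset.sum_sub_distrib, Finset.mul_sum, Finset.sum_const, nsmul_eq_mul, hcard]
    have T3 : (N:ℝ) * (∑ j ∈ Finset.Ico N (2*N), Real.logb 2 (j:ℝ)) - (N:ℝ) * S
        ≤ (N:ℝ) * ((N:ℝ) * ((M:ℝ) + 2 - 1 / Real.log 2)) - (N:ℝ) * S := by
      have := mul_le_mul_of_nonneg_left step2 (le_of_lt hNR)
      linarith
    have hT : ∑ j ∈ Finset.Ico ((2:ℕ) ^ M) (2 ^ (M+1)), ∑ i,
          (P i : ℝ) * (⌊Real.logb 2 ((j : ℝ) / (P i : ℝ))⌋ : ℝ)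
        ≤ (N:ℝ) * ((N:ℝ) * ((M:ℝ) + 2 - 1 / Real.log 2)) - (N:ℝ) * S := by
      rw [hIco]; linarith
    have hpow2 : (2:ℝ) ^ (2*M) = (N:ℝ) * (N:ℝ) := by
      rw [hN]; push_cast; rw [two_mul, pow_add]
    have hposinv : (0:ℝ) < 1 / (2:ℝ) ^ (2*M) := by positivity
    have := mul_le_mul_of_nonneg_left hT (le_of_lt hposinv)
    rw [hlogbe]
    have hNne : (N:ℝ) ≠ 0 := ne_of_gt hNR
    have heq : (1 / (2:ℝ) ^ (2*M)) * ((N:ℝ) * ((N:ℝ) * ((M:ℝ) + 2 - 1 / Real.log 2)) - (N:ℝ) * S)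
        = (M:ℝ) + 2 - 1 / Real.log 2 - S / (N:ℝ) := by
      rw [hpow2]; field_simp
    have hNpow : ((2:ℝ) ^ M) = (N:ℝ) := by rw [hN]; push_cast; ring
    rw [hNpow]
    linarith [this, heq.le, heq.ge]
  refine ⟨main, ?_⟩
  have : ((M : ℝ) - S / 2 ^ M) + (2 - Real.logb 2 (Real.exp 1))
      = (M : ℝ) + 2 - Real.logb 2 (Real.exp 1) - S / 2 ^ M := by ring
  rw [this]
  exact main
end

section
/- Uniqueness of the bit count in ANS-AI encoding: for S ∈ [2^M, 2^{M+1}) and 1 ≤ P ≤ 2^{M-1}, the number b = ⌊(δ + S)/2^M⌋ with δ = k·2^M - P·2^k (k the unique exponent with P·2^k ∈ [2^M, 2^{M+1})) is the unique natural number such that ⌊S/2^b⌋ ∈ [P, 2P). -/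
/-- Uniqueness of the bit count in ANS-AI encoding: `⌊(δ + S)/2^M⌋` is the unique
`b` with `⌊S/2^b⌋ ∈ [P, 2P)`. -/
theorem ansai_bit_count_unique
    (M P S k : ℕ) (hM : 2 ≤ M)
    (hP : 1 ≤ P ∧ P ≤ 2 ^ (M - 1))
    (hS : 2 ^ M ≤ S ∧ S < 2 ^ (M + 1))
    (hk : 2 ^ M ≤ P * 2 ^ k ∧ P * 2 ^ k < 2 ^ (M + 1))
    (δ : ℕ) (hδ : δ = k * 2 ^ M - P * 2 ^ k) :
    ∀ b : ℕ, (P ≤ S / 2 ^ b ∧ S / 2 ^ b < 2 * P) ↔ b = (δ + S) / 2 ^ M := by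
  obtain ⟨hP1, hP2⟩ := hP
  obtain ⟨hS1, hS2⟩ := hS
  obtain ⟨hk1, hk2⟩ := hk
  have hA : 2 ^ (M + 1) = 2 * 2 ^ M := by rw [pow_succ]; ring
  have h2P : 2 * P ≤ 2 ^ M := by
    have : 2 * 2 ^ (M - 1) = 2 ^ M := by
      rw [← pow_succ']; congr 1; omega
    omega
  have hkpos : 1 ≤ k := by
    by_contra h
    have hk0 : k = 0 := by omega
    subst hk0
    simp at hk1
    omega
  have hδ2 : P * 2 ^ k ≤ k * 2 ^ M := by
    rcases Nat.lt_or_ge k 2 with h | h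
    · have hk1' : k = 1 := by omega
      subst hk1'
      simpa [pow_one, mul_comm] using h2P
    · have h2 : 2 * 2 ^ M ≤ k * 2 ^ M :=
        Nat.mul_le_mul_right _ h
      omega
  -- the candidate satisfies the property, in product form
  have hT : 2 ^ k = 2 * 2 ^ (k - 1) := by
    rw [← pow_succ']; congr 1; omega
  have key : P * 2 ^ ((δ + S) / 2 ^ M) ≤ S ∧ S < 2 * P * 2 ^ ((δ + S) / 2 ^ M) := by
    rcases Nat.lt_or_ge S (P * 2 ^ k) with h | h
    · -- b₀ = k - 1
      have hkk : (k - 1) * 2 ^ M + 2 ^ M = k * 2 ^ M := by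
        have h' : k - 1 + 1 = k := by omega
        calc (k - 1) * 2 ^ M + 2 ^ M = (k - 1 + 1) * 2 ^ M := by ring
          _ = k * 2 ^ M := by rw [h']
      have hb0 : (δ + S) / 2 ^ M = k - 1 := by
        apply Nat.div_eq_of_lt_le
        · omega
        · have : (k - 1 + 1) * 2 ^ M = (k - 1) * 2 ^ M + 2 ^ M := by ring
          omega
      rw [hb0]
      constructor
      · -- P * 2^(k-1) ≤ S : since 2*(P*2^(k-1)) = P*2^k < 2^(M+1) so P*2^(k-1) < 2^M ≤ S
        have : 2 * (P * 2 ^ (k - 1)) = P * 2 ^ k := by rw [hT]; ring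
        omega
      · have : 2 * P * 2 ^ (k - 1) = P * 2 ^ k := by rw [hT]; ring
        omega
    · -- b₀ = k
      have hb0 : (δ + S) / 2 ^ M = k := by
        apply Nat.div_eq_of_lt_le
        · omega
        · have : (k + 1) * 2 ^ M = k * 2 ^ M + 2 ^ M := by ring
          omega
      rw [hb0]
      constructor
      · omega
      · have : 2 * P * 2 ^ k = 2 * (P * 2 ^ k) := by ring
        omega
  intro b
  have hpow : (0 : ℕ) < 2 ^ b := Nat.pow_pos (by norm_num)
  rw [Nat.le_div_iff_mul_le hpow, Nat.div_lt_iff_lt_mul hpow]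
  constructor
  · rintro ⟨h1, h2⟩
    -- uniqueness
    set c := (δ + S) / 2 ^ M with hc
    by_contra hne
    rcases Nat.lt_or_ge b c with hlt | hge
    · have h2b : 2 ^ (b + 1) ≤ 2 ^ c := Nat.pow_le_pow_right (by norm_num) hlt
      have : 2 * P * 2 ^ b = P * 2 ^ (b + 1) := by rw [pow_succ]; ring
      have hle : P * 2 ^ (b + 1) ≤ P * 2 ^ c := Nat.mul_le_mul_left _ h2b
      omega
    · have hlt' : c < b := by omega
      have h2c : 2 ^ (c + 1) ≤ 2 ^ b := Nat.pow_le_pow_right (by norm_num) hlt'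
      have h1' : 2 * P * 2 ^ c = P * 2 ^ (c + 1) := by rw [pow_succ]; ring
      have hle : P * 2 ^ (c + 1) ≤ P * 2 ^ b := Nat.mul_le_mul_left _ h2c
      omega
  · rintro rfl
    exact ⟨key.1, by have := key.2; omega⟩
end
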